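/- Let V be a finite symmetric spherical sampling in ℝ³, f : V → ℝ antipodally symmetric, and L : V × V → ℝ jointly negation-symmetric. Let R be a linear isometry of ℝ³ that preserves V (R(V) = V) and leaves L invariant (L(R(p), R(q)) = L(p,q) for all p,q ∈ V). Then f ∘ R is antipodally symmetric, and the hemispherical filtering is rotation-equivariant: for every p ∈ V, (L⁺·(f∘R)⁺)(p⁺) = (L⁺·f⁺)((R(p))⁺), where f⁺ and (f∘R)⁺ are the restrictions to V⁺ and p⁺ = p if p ∈ V⁺ and p⁺ = −p otherwise. -/
import Mathlib

open Finset

attribute [local instance] Classical.propDecidable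

def hemi (p : EuclideanSpace ℝ (Fin 3)) : Prop :=
  0 < p 2 ∨ (p 2 = 0 ∧ 0 < p 1) ∨ (p 2 = 0 ∧ p 1 = 0 ∧ 0 < p 0)

noncomputable def hemiRep (p : EuclideanSpace ℝ (Fin 3)) : EuclideanSpace ℝ (Fin 3) :=
  if hemi p then p else -p

lemma neg_apply' (p : EuclideanSpace ℝ (Fin 3)) (i : Fin 3) : (-p) i = -(p i) := rfl

lemma hemi_neg {p : EuclideanSpace ℝ (Fin 3)} (h : hemi p) : ¬ hemi (-p) := by
  simp only [hemi, neg_apply'] at *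
  rcases h with h | ⟨h1, h2⟩ | ⟨h1, h2, h3⟩ <;>
    rintro (h' | ⟨h1', h2'⟩ | ⟨h1', h2', h3'⟩) <;> linarith

lemma hemi_or {p : EuclideanSpace ℝ (Fin 3)} (hp : p ≠ 0) : hemi p ∨ hemi (-p) := by
  by_contra h
  push_neg at h
  apply hp
  obtain ⟨h1, h2⟩ := h
  simp only [hemi, neg_apply', not_or, not_lt, not_and] at h1 h2
  ext i
  have e2 : p 2 = 0 := le_antisymm h1.1 (by linarith [h2.1])
  have e1 : p 1 = 0 := le_antisymm (h1.2.1 e2) (by linarith [h2.2.1 (by simp [e2])])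
  have e0 : p 0 = 0 := le_antisymm (h1.2.2 e2 e1) (by
    have := h2.2.2 (by simp [e2]) (by simp [e1]); linarith)
  fin_cases i <;> simp [e0, e1, e2]

lemma hemi_hemiRep {p : EuclideanSpace ℝ (Fin 3)} (hp : p ≠ 0) : hemi (hemiRep p) := by
  unfold hemiRep
  split
  · assumption
  · rcases hemi_or hp with h | h
    · tauto
    · exact h

lemma hemiRep_neg {p : EuclideanSpace ℝ (Fin 3)} (hp : p ≠ 0) : hemiRep (-p) = hemiRep p := by
  unfold hemiRep
  rcases hemi_or hp with h | h
  · rw [if_pos h, if_neg (hemi_neg h), neg_neg]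
  · rw [if_pos h, if_neg]
    intro h'
    exact hemi_neg h' h

lemma hemiRep_eq_or (p : EuclideanSpace ℝ (Fin 3)) : hemiRep p = p ∨ hemiRep p = -p := by
  unfold hemiRep; split <;> simp

/-- If a linear isometry `R` preserves the sampling `V` and leaves the kernel `L`
invariant, then `f ∘ R` is antipodally symmetric and the hemispherical filtering is
rotation-equivariant: `(L⁺·(f∘R)⁺)(p⁺) = (L⁺·f⁺)((R p)⁺)`. -/
theorem hemispherical_filtering_rotation_equivariant
    (V : Finset (EuclideanSpace ℝ (Fin 3)))
    (hVsym : ∀ p ∈ V, -p ∈ V)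
    (hVunit : ∀ p ∈ V, ‖p‖ = 1)
    (f : EuclideanSpace ℝ (Fin 3) → ℝ)
    (hf : ∀ p ∈ V, f (-p) = f p)
    (L : EuclideanSpace ℝ (Fin 3) → EuclideanSpace ℝ (Fin 3) → ℝ)
    (hL : ∀ p ∈ V, ∀ q ∈ V, L (-p) (-q) = L p q)
    (R : EuclideanSpace ℝ (Fin 3) ≃ₗᵢ[ℝ] EuclideanSpace ℝ (Fin 3))
    (hRV : V.image (fun p => R p) = V)
    (hRL : ∀ p ∈ V, ∀ q ∈ V, L (R p) (R q) = L p q) :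
    (∀ p ∈ V, f (R (-p)) = f (R p)) ∧
    (∀ p ∈ V,
      ∑ q ∈ V.filter hemi, (L (hemiRep p) q + L (hemiRep p) (-q)) * f (R q)
        = ∑ q ∈ V.filter hemi,
            (L (hemiRep (R p)) q + L (hemiRep (R p)) (-q)) * f q) := by
  -- basic membership facts
  have hRmem : ∀ q ∈ V, R q ∈ V := by
    intro q hq
    rw [← hRV]
    exact mem_image_of_mem _ hq
  have hRsymmem : ∀ q ∈ V, R.symm q ∈ V := by
    intro q hq
    rw [← hRV] at hq
    obtain ⟨a, ha, rfl⟩ := mem_image.mp hq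
    simpa using ha
  have hne : ∀ q ∈ V, q ≠ 0 := by
    intro q hq h0
    have := hVunit q hq
    rw [h0] at this
    simp at this
  have hRepV : ∀ q ∈ V, hemiRep q ∈ V := by
    intro q hq
    rcases hemiRep_eq_or q with h | h <;> rw [h]
    · exact hq
    · exact hVsym q hq
  -- L-plus is invariant under negating the first argument
  have hLneg : ∀ a ∈ V, ∀ x ∈ V, L (-a) x + L (-a) (-x) = L a x + L a (-x) := by
    intro a ha x hx
    have h1 : L (-a) x = L a (-x) := by
      have := hL a ha (-x) (hVsym x hx)
      rwa [neg_neg] at this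
    have h2 : L (-a) (-x) = L a x := hL a ha x hx
    rw [h1, h2, add_comm]
  constructor
  · intro p hp
    rw [map_neg]
    exact hf (R p) (hRmem p hp)
  · intro p hp
    have hRpV : R p ∈ V := hRmem p hp
    have hbV : hemiRep (R p) ∈ V := hRepV _ hRpV
    have haV : hemiRep p ∈ V := hRepV p hp
    have step1 : ∀ q ∈ V.filter hemi,
        (L (hemiRep p) q + L (hemiRep p) (-q)) * f (R q)
          = (L (hemiRep (R p)) (R q) + L (hemiRep (R p)) (-(R q))) * f (R q) := by
      intro q hq
      rw [mem_filter] at hq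
      have hqV := hq.1
      have hRqV : R q ∈ V := hRmem q hqV
      have e1 : L (hemiRep p) q = L (R (hemiRep p)) (R q) := (hRL _ haV _ hqV).symm
      have e2 : L (hemiRep p) (-q) = L (R (hemiRep p)) (-(R q)) := by
        rw [← map_neg]
        exact (hRL _ haV _ (hVsym q hqV)).symm
      rw [e1, e2]
      congr 1
      rcases hemiRep_eq_or p with h | h <;> rcases hemiRep_eq_or (R p) with h' | h' <;>
        rw [h, h']
      · exact (hLneg (R p) hRpV (R q) hRqV).symm
      · rw [map_neg]
        exact hLneg (R p) hRpV (R q) hRqV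
      · rw [map_neg]
    rw [Finset.sum_congr rfl step1]
    have hG : ∀ x ∈ V, (L (hemiRep (R p)) (-x) + L (hemiRep (R p)) (-(-x))) * f (-x)
        = (L (hemiRep (R p)) x + L (hemiRep (R p)) (-x)) * f x := by
      intro x hx
      rw [neg_neg, hf x hx, add_comm (L (hemiRep (R p)) x)]
    refine Finset.sum_bij' (fun q _ => hemiRep (R q)) (fun q _ => hemiRep (R.symm q))
      ?_ ?_ ?_ ?_ ?_
    · intro q hq
      rw [mem_filter] at hq ⊢
      have hRqV := hRmem q hq.1
      exact ⟨hRepV _ hRqV, hemi_hemiRep (hne _ hRqV)⟩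
    · intro q hq
      rw [mem_filter] at hq ⊢
      have hRqV := hRsymmem q hq.1
      exact ⟨hRepV _ hRqV, hemi_hemiRep (hne _ hRqV)⟩
    · intro q hq
      rw [mem_filter] at hq
      show hemiRep (R.symm (hemiRep (R q))) = q
      rcases hemiRep_eq_or (R q) with h | h <;> rw [h]
      · rw [LinearIsometryEquiv.symm_apply_apply]
        exact if_pos hq.2
      · rw [map_neg, LinearIsometryEquiv.symm_apply_apply, hemiRep_neg (hne q hq.1)]
        exact if_pos hq.2
    · intro q hq
      rw [mem_filter] at hq
      show hemiRep (R (hemiRep (R.symm q))) = q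
      rcases hemiRep_eq_or (R.symm q) with h | h <;> rw [h]
      · rw [LinearIsometryEquiv.apply_symm_apply]
        exact if_pos hq.2
      · rw [map_neg, LinearIsometryEquiv.apply_symm_apply, hemiRep_neg (hne q hq.1)]
        exact if_pos hq.2
    · intro q hq
      rw [mem_filter] at hq
      have hRqV := hRmem q hq.1
      show _ = (L (hemiRep (R p)) (hemiRep (R q)) + L (hemiRep (R p)) (-(hemiRep (R q))))
          * f (hemiRep (R q))
      rcases hemiRep_eq_or (R q) with h | h <;> rw [h]
      · exact (hG _ hRqV).symm
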